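/- Let V be a finite-dimensional complex vector space and let (F, W) be a Hodge–Tate pair of filtrations on V. Set A_p := F_{-p} ∩ W_{2p} for p ∈ ℤ. Then V is the internal direct sum V = ⊕_{p∈ℤ} A_p; moreover for every p one has F_{-p} = ⊕_{q ≥ p} A_q and W_{2p} = ⊕_{q ≤ p} A_q. (This bigraded splitting of a Hodge–Tate pair is the linear-algebra mechanism behind Proposition 2.13, where the Hodge–Tate condition forces the skewed canonical extension to be a trivial bundle over ℙ¹, i.e. forces speciality.) -/

import Mathlib

/-- A (finite, exhaustive, increasing) filtration of a complex vector space `V`: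
an increasing family of subspaces which is `⊥` for sufficiently small indices
and `⊤` (all of `V`) for sufficiently large indices. -/
def IsFiltrationZ {V : Type*} [AddCommGroup V] [Module ℂ V]
    (G : ℤ → Submodule ℂ V) : Prop :=
  Monotone G ∧ (∃ a : ℤ, ∀ m : ℤ, m ≤ a → G m = ⊥) ∧ (∃ b : ℤ, ∀ m : ℤ, b ≤ m → G m = ⊤)

/-- A pair `(F, W)` of filtrations on `V` is Hodge–Tate if `W_{2i+1} = W_{2i}` for
every `i` and `V` is the internal direct sum of `F_{-j}` and `W_{2j-2}` for every `j`. -/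
def IsHodgeTatePair {V : Type*} [AddCommGroup V] [Module ℂ V]
    (F W : ℤ → Submodule ℂ V) : Prop :=
  IsFiltrationZ F ∧ IsFiltrationZ W ∧
  (∀ i : ℤ, W (2 * i + 1) = W (2 * i)) ∧
  (∀ j : ℤ, F (-j) ⊓ W (2 * j - 2) = ⊥ ∧ F (-j) ⊔ W (2 * j - 2) = ⊤)

/-!
Write `f p = F_{-p}` (decreasing) and `w p = W_{2p}` (increasing). The Hodge–Tate condition says
that `f (p + 1)` and `w p` are complements for every `p`. By the modular law this peels off
`A_p = f p ⊓ w p` one step at a time: `f p = A_p ⊔ f (p + 1)` and `w p = A_p ⊔ w (p - 1)`, and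
since both filtrations are finite, iterating gives the two descriptions. Independence is the
modular law again: the `A_q` with `q ≠ p` lie in `f (p + 1) ⊔ w (p - 1)`, which meets `w p` only
in `w (p - 1)`, and `w (p - 1)` is disjoint from `f p`.
-/

structure IsComplementaryPair {α : Type*} [Lattice α] [BoundedOrder α] (f w : ℤ → α) : Prop where
  antitone : Antitone f
  monotone : Monotone w
  isCompl : ∀ p, IsCompl (f (p + 1)) (w p)

namespace IsComplementaryPair

variable {α : Type*} [CompleteLattice α] [IsModularLattice α] {f w : ℤ → α}

theorem left_eq_inf_sup_succ (h : IsComplementaryPair f w) (p : ℤ) :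
    f p = f p ⊓ w p ⊔ f (p + 1) := by
  have hle : f (p + 1) ≤ f p := h.antitone (Int.le_add_one le_rfl)
  calc f p = (f (p + 1) ⊔ w p) ⊓ f p := by rw [(h.isCompl p).sup_eq_top, top_inf_eq]
    _ = f p ⊓ w p ⊔ f (p + 1) := by rw [sup_inf_assoc_of_le _ hle, inf_comm, sup_comm]

theorem right_succ_eq_inf_sup (h : IsComplementaryPair f w) (p : ℤ) :
    w (p + 1) = f (p + 1) ⊓ w (p + 1) ⊔ w p := by
  have hle : w p ≤ w (p + 1) := h.monotone (Int.le_add_one le_rfl)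
  calc w (p + 1) = (f (p + 1) ⊔ w p) ⊓ w (p + 1) := by
        rw [(h.isCompl p).sup_eq_top, top_inf_eq]
    _ = f (p + 1) ⊓ w (p + 1) ⊔ w p := by
        rw [sup_comm, sup_inf_assoc_of_le _ hle, sup_comm]

theorem left_eq_iSup_inf_of_ge (h : IsComplementaryPair f w) {b : ℤ} (hb : f b = ⊥) (p : ℤ) :
    f p = ⨆ q, ⨆ _ : p ≤ q, f q ⊓ w q := by
  refine le_antisymm ?_ (iSup₂_le fun q hpq => inf_le_left.trans (h.antitone hpq))
  rcases le_total b p with hbp | hpb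
  · exact (h.antitone hbp).trans (hb ▸ bot_le)
  induction p, hpb using Int.leInductionDown with
  | base => exact hb ▸ bot_le
  | pred n _ ih =>
    rw [h.left_eq_inf_sup_succ (n - 1), sub_add_cancel]
    refine sup_le (le_iSup₂_of_le (n - 1) le_rfl le_rfl) (ih.trans ?_)
    exact iSup₂_le fun q hnq => le_iSup₂_of_le q (by lia) le_rfl

theorem right_eq_iSup_inf_of_le (h : IsComplementaryPair f w) {a : ℤ} (ha : w a = ⊥) (p : ℤ) :
    w p = ⨆ q, ⨆ _ : q ≤ p, f q ⊓ w q := by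
  refine le_antisymm ?_ (iSup₂_le fun q hqp => inf_le_right.trans (h.monotone hqp))
  rcases le_total p a with hpa | hap
  · exact (h.monotone hpa).trans (ha ▸ bot_le)
  induction p, hap using Int.leInduction with
  | base => exact ha ▸ bot_le
  | succ n _ ih =>
    rw [h.right_succ_eq_inf_sup n]
    refine sup_le (le_iSup₂_of_le (n + 1) le_rfl le_rfl) (ih.trans ?_)
    exact iSup₂_le fun q hqn => le_iSup₂_of_le q (by lia) le_rfl

theorem iSup_inf_eq_top (h : IsComplementaryPair f w) {a b : ℤ} (ha : w a = ⊥) (hb : w b = ⊤) :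
    ⨆ p, f p ⊓ w p = ⊤ := by
  rw [eq_top_iff, ← hb, h.right_eq_iSup_inf_of_le ha b]
  exact iSup₂_le fun q _ => le_iSup (fun p => f p ⊓ w p) q

theorem iSupIndep_inf (h : IsComplementaryPair f w) : iSupIndep fun p => f p ⊓ w p := by
  intro p
  have hothers : (⨆ q, ⨆ _ : q ≠ p, f q ⊓ w q) ≤ f (p + 1) ⊔ w (p - 1) := by
    refine iSup₂_le fun q hqp => ?_
    rcases hqp.lt_or_gt with hlt | hgt
    · exact le_sup_of_le_right (inf_le_right.trans (h.monotone (by lia)))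
    · exact le_sup_of_le_left (inf_le_left.trans (h.antitone (by lia)))
  have hpred : w (p - 1) ≤ w p := h.monotone (by lia)
  have hmeet : (f (p + 1) ⊔ w (p - 1)) ⊓ w p = w (p - 1) := by
    rw [sup_comm, sup_inf_assoc_of_le _ hpred, (h.isCompl p).inf_eq_bot, sup_bot_eq]
  have hdisj : f p ⊓ w (p - 1) = ⊥ := by
    simpa using (h.isCompl (p - 1)).inf_eq_bot
  rw [disjoint_iff, eq_bot_iff, ← hdisj]
  refine le_inf (inf_le_left.trans inf_le_left) (hmeet ▸ le_inf ?_ ?_)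
  · exact inf_le_right.trans hothers
  · exact inf_le_left.trans inf_le_right

end IsComplementaryPair

theorem hodgeTate_bigraded_splitting_general {V : Type*} [AddCommGroup V] [Module ℂ V]
    (F W : ℤ → Submodule ℂ V)
    (h : IsHodgeTatePair F W) :
    DirectSum.IsInternal (fun p : ℤ => F (-p) ⊓ W (2 * p)) ∧
    (∀ p : ℤ, F (-p) = ⨆ q : ℤ, ⨆ _ : p ≤ q, F (-q) ⊓ W (2 * q)) ∧
    (∀ p : ℤ, W (2 * p) = ⨆ q : ℤ, ⨆ _ : q ≤ p, F (-q) ⊓ W (2 * q)) := by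
  obtain ⟨⟨hF, ⟨aF, haF⟩, -⟩, ⟨hW, ⟨aW, haW⟩, ⟨bW, hbW⟩⟩, -, hHT⟩ := h
  have hpair : IsComplementaryPair (fun p => F (-p)) (fun p => W (2 * p)) := by
    refine ⟨fun p q hpq => hF (by lia), fun p q hpq => hW (by lia), fun p => ?_⟩
    obtain ⟨hbot, htop⟩ := hHT (p + 1)
    rw [show 2 * (p + 1) - 2 = 2 * p by ring] at hbot htop
    exact ⟨disjoint_iff.mpr hbot, codisjoint_iff.mpr htop⟩
  have hFbot : F (-(-aF)) = ⊥ := haF _ (by lia)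
  have hWbot : W (2 * min aW 0) = ⊥ := haW _ (by lia)
  have hWtop : W (2 * max bW 0) = ⊤ := hbW _ (by lia)
  exact ⟨DirectSum.isInternal_submodule_of_iSupIndep_of_iSup_eq_top hpair.iSupIndep_inf
      (hpair.iSup_inf_eq_top hWbot hWtop),
    hpair.left_eq_iSup_inf_of_ge hFbot, hpair.right_eq_iSup_inf_of_le hWbot⟩

/-- For a Hodge–Tate pair `(F, W)` on a finite-dimensional complex vector space `V`,
setting `A_p := F_{-p} ⊓ W_{2p}`, the space `V` is the internal direct sum of the
`A_p`; moreover `F_{-p} = ⊕_{q ≥ p} A_q` and `W_{2p} = ⊕_{q ≤ p} A_q` for every `p`. -/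
theorem hodgeTate_bigraded_splitting {V : Type*} [AddCommGroup V] [Module ℂ V]
    [FiniteDimensional ℂ V] (F W : ℤ → Submodule ℂ V)
    (h : IsHodgeTatePair F W) :
    DirectSum.IsInternal (fun p : ℤ => F (-p) ⊓ W (2 * p)) ∧
    (∀ p : ℤ, F (-p) = ⨆ q : ℤ, ⨆ _ : p ≤ q, F (-q) ⊓ W (2 * q)) ∧
    (∀ p : ℤ, W (2 * p) = ⨆ q : ℤ, ⨆ _ : q ≤ p, F (-q) ⊓ W (2 * q)) :=
  hodgeTate_bigraded_splitting_general F W h
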